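/- arXiv:2605.00762 — 5 statements merged into one kernel-verified Lean document; each statement's English description precedes it below -/
import Mathlib

section
/- Symmetry of the K-Shapley value: let V be a K-restricted cooperative game on [M] and let i, j ∈ [M] be symmetric players, i.e. V(S ∪ {i}) = V(S ∪ {j}) for every S ⊆ [M] \ {i, j} with |S| ≤ K − 1. Then φ_i^K(V) = φ_j^K(V). -/
open Finset

/-- The `K`-Shapley value of player `i` in a `K`-restricted cooperative game `V` on `[M]`. -/
noncomputable def KShapley (M K : ℕ) (V : Finset (Fin M) → ℝ) (i : Fin M) : ℝ :=
  (1 / ((M - 1).choose (K - 1) : ℝ)) *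
    ∑ SK ∈ Finset.filter (fun SK => i ∈ SK)
        (Finset.powersetCard K (Finset.univ : Finset (Fin M))),
      ∑ S ∈ (SK.erase i).powerset,
        ((S.card.factorial * (K - S.card - 1).factorial : ℕ) : ℝ) / (K.factorial : ℝ) *
          (V (insert i S) - V S)

/-!
Relabelling the players by a permutation `σ` moves the `K`-Shapley value of `i` to `σ i`.
For `σ = swap i j` the symmetry hypothesis says exactly that relabelling leaves the game
unchanged on all coalitions of size at most `K`, which are the only ones the `K`-Shapley
value sees.
-/

theorem Finset.map_swap_eq_self {α : Type*} [DecidableEq α] {i j : α} {T : Finset α}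
    (h : i ∈ T ↔ j ∈ T) : T.map (Equiv.swap i j).toEmbedding = T := by
  ext a
  rw [mem_map_equiv, Equiv.symm_swap, Equiv.swap_apply_def]
  split_ifs with hai haj
  · subst hai; exact h.symm
  · subst haj; exact h
  · rfl

theorem Finset.map_swap_of_mem_of_notMem {α : Type*} [DecidableEq α] {a b : α}
    {T : Finset α} (ha : a ∈ T) (hb : b ∉ T) :
    T.map (Equiv.swap a b).toEmbedding = insert b (T.erase a) := by
  conv_lhs => rw [← insert_erase ha]
  rw [map_insert, Equiv.coe_toEmbedding, Equiv.swap_apply_left,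
    map_swap_eq_self (iff_of_false (notMem_erase a T) fun h => hb (mem_of_mem_erase h))]

theorem KShapley_congr {M K : ℕ} {V W : Finset (Fin M) → ℝ}
    (hVW : ∀ T : Finset (Fin M), T.card ≤ K → V T = W T) (i : Fin M) :
    KShapley M K V i = KShapley M K W i := by
  unfold KShapley
  congr 1
  refine sum_congr rfl fun SK hSK => sum_congr rfl fun S hS => ?_
  obtain ⟨⟨-, hcard⟩, hiSK⟩ := by simpa only [mem_filter, mem_powersetCard] using hSK
  have hS : S ⊆ SK.erase i := mem_powerset.mp hS
  have hinsert : insert i S ⊆ SK := insert_subset hiSK (hS.trans (erase_subset i SK))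
  rw [hVW S (hcard ▸ card_le_card (hS.trans (erase_subset i SK))),
    hVW (insert i S) (hcard ▸ card_le_card hinsert)]

theorem KShapley_map_equiv {M K : ℕ} (V : Finset (Fin M) → ℝ) (σ : Fin M ≃ Fin M)
    (i : Fin M) :
    KShapley M K (fun T => V (T.map σ.toEmbedding)) i = KShapley M K V (σ i) := by
  unfold KShapley
  congr 1
  refine sum_equiv σ.finsetCongr (fun SK => ?_) fun SK _ => ?_
  · simp [Equiv.finsetCongr_apply]
  refine sum_equiv σ.finsetCongr (fun S => ?_) fun S _ => ?_
  · rw [Equiv.finsetCongr_apply, Equiv.finsetCongr_apply, mem_powerset, mem_powerset,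
      show σ i = σ.toEmbedding i from rfl, ← map_erase, map_subset_map]
  · simp only [Equiv.finsetCongr_apply, card_map, map_insert, Equiv.coe_toEmbedding]

theorem apply_map_swap_eq_of_symmetric {α : Type*} [DecidableEq α] {K : ℕ}
    {V : Finset α → ℝ} {i j : α}
    (hsym : ∀ S : Finset α, i ∉ S → j ∉ S → S.card ≤ K - 1 →
      V (insert i S) = V (insert j S))
    {T : Finset α} (hT : T.card ≤ K) : V (T.map (Equiv.swap i j).toEmbedding) = V T := by
  by_cases hij : i ∈ T ↔ j ∈ T
  · rw [map_swap_eq_self hij]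
  have hcard : ∀ {a}, a ∈ T → (T.erase a).card ≤ K - 1 := fun ha => by
    rw [card_erase_of_mem ha]; omega
  by_cases hi : i ∈ T
  · have hj : j ∉ T := fun hj => hij (iff_of_true hi hj)
    rw [map_swap_of_mem_of_notMem hi hj,
      ← hsym _ (notMem_erase i T) (fun h => hj (mem_of_mem_erase h)) (hcard hi), insert_erase hi]
  · have hj : j ∈ T := by tauto
    rw [Equiv.swap_comm, map_swap_of_mem_of_notMem hj hi,
      hsym _ (fun h => hi (mem_of_mem_erase h)) (notMem_erase j T) (hcard hj), insert_erase hj]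

theorem kshapley_symmetry_general (M K : ℕ)
    (V : Finset (Fin M) → ℝ) (i j : Fin M)
    (hsym : ∀ S : Finset (Fin M), i ∉ S → j ∉ S → S.card ≤ K - 1 →
      V (insert i S) = V (insert j S)) :
    KShapley M K V i = KShapley M K V j := by
  calc KShapley M K V i
      = KShapley M K (fun T => V (T.map (Equiv.swap i j).toEmbedding)) i :=
        KShapley_congr (fun T hT => (apply_map_swap_eq_of_symmetric hsym hT).symm) i
    _ = KShapley M K V j := by rw [KShapley_map_equiv, Equiv.swap_apply_left]

/-- Symmetry of the `K`-Shapley value: if `i` and `j` are symmetric players of a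
`K`-restricted cooperative game `V` on `[M]`, then their `K`-Shapley values agree. -/
theorem kshapley_symmetry (M K : ℕ) (hM : 1 ≤ M) (hK1 : 1 ≤ K) (hKM : K ≤ M)
    (V : Finset (Fin M) → ℝ) (hV0 : V ∅ = 0) (i j : Fin M)
    (hsym : ∀ S : Finset (Fin M), i ∉ S → j ∉ S → S.card ≤ K - 1 →
      V (insert i S) = V (insert j S)) :
    KShapley M K V i = KShapley M K V j :=
  kshapley_symmetry_general M K V i j hsym
end

section
/- K-efficiency of the K-Shapley value: for every K-restricted cooperative game V on [M], the sum of the K-Shapley values over all players satisfies Σ_{i ∈ [M]} φ_i^K(V) = (1/C(M−1, K−1)) · Σ_{T ⊆ [M], |T| = K} V(T). -/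
open Finset

private lemma sum1_reindex {M K : ℕ} (V : Finset (Fin M) → ℝ) (SK : Finset (Fin M)) :
    ∑ i ∈ SK, ∑ S ∈ (SK.erase i).powerset,
        ((S.card.factorial * (K - S.card - 1).factorial : ℕ) : ℝ) / (K.factorial : ℝ)
          * V (insert i S)
      = ∑ T ∈ SK.powerset, (T.card : ℝ) *
          (((T.card - 1).factorial * (K - (T.card - 1) - 1).factorial : ℕ) : ℝ)
            / (K.factorial : ℝ) * V T := by
  have hrhs : ∑ T ∈ SK.powerset, (T.card : ℝ) *
          (((T.card - 1).factorial * (K - (T.card - 1) - 1).factorial : ℕ) : ℝ)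
            / (K.factorial : ℝ) * V T
      = ∑ x ∈ SK.powerset.sigma (fun T => T),
          (((x.1.card - 1).factorial * (K - (x.1.card - 1) - 1).factorial : ℕ) : ℝ)
            / (K.factorial : ℝ) * V x.1 := by
    symm
    rw [Finset.sum_sigma]
    refine Finset.sum_congr rfl fun T _ => ?_
    dsimp only
    rw [Finset.sum_const, nsmul_eq_mul]
    ring
  rw [Finset.sum_sigma', hrhs]
  · apply Finset.sum_nbij' (fun p => ⟨insert p.1 p.2, p.1⟩) (fun q => ⟨q.2, q.1.erase q.2⟩)
    · rintro ⟨i, S⟩ hp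
      simp only [Finset.mem_sigma, Finset.mem_powerset] at hp ⊢
      obtain ⟨hi, hS⟩ := hp
      exact ⟨Finset.insert_subset hi ((hS.trans (Finset.erase_subset _ _))),
        Finset.mem_insert_self _ _⟩
    · rintro ⟨T, i⟩ hq
      simp only [Finset.mem_sigma, Finset.mem_powerset] at hq ⊢
      exact ⟨hq.1 hq.2, Finset.erase_subset_erase _ hq.1⟩
    · rintro ⟨i, S⟩ hp
      simp only [Finset.mem_sigma, Finset.mem_powerset] at hp
      have : i ∉ S := fun h => (Finset.mem_erase.mp (hp.2 h)).1 rfl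
      simp [Finset.erase_insert this]
    · rintro ⟨T, i⟩ hq
      simp only [Finset.mem_sigma, Finset.mem_powerset] at hq
      simp [Finset.insert_erase hq.2]
    · rintro ⟨i, S⟩ hp
      simp only [Finset.mem_sigma, Finset.mem_powerset] at hp
      have hiS : i ∉ S := fun h => (Finset.mem_erase.mp (hp.2 h)).1 rfl
      have hc : (insert i S).card = S.card + 1 := Finset.card_insert_of_notMem hiS
      simp [hc]

private lemma sum2_reindex {M K : ℕ} (V : Finset (Fin M) → ℝ) (SK : Finset (Fin M)) :
    ∑ i ∈ SK, ∑ S ∈ (SK.erase i).powerset,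
        ((S.card.factorial * (K - S.card - 1).factorial : ℕ) : ℝ) / (K.factorial : ℝ) * V S
      = ∑ S ∈ SK.powerset, ((SK \ S).card : ℝ) *
          (((S.card).factorial * (K - S.card - 1).factorial : ℕ) : ℝ)
            / (K.factorial : ℝ) * V S := by
  have hrhs : ∑ S ∈ SK.powerset, ((SK \ S).card : ℝ) *
          (((S.card).factorial * (K - S.card - 1).factorial : ℕ) : ℝ)
            / (K.factorial : ℝ) * V S
      = ∑ x ∈ SK.powerset.sigma (fun S => SK \ S),
          (((x.1.card).factorial * (K - x.1.card - 1).factorial : ℕ) : ℝ)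
            / (K.factorial : ℝ) * V x.1 := by
    symm
    rw [Finset.sum_sigma]
    refine Finset.sum_congr rfl fun S _ => ?_
    dsimp only
    rw [Finset.sum_const, nsmul_eq_mul]
    ring
  rw [Finset.sum_sigma', hrhs]
  · apply Finset.sum_nbij' (fun p => ⟨p.2, p.1⟩) (fun q => ⟨q.2, q.1⟩)
    · rintro ⟨i, S⟩ hp
      simp only [Finset.mem_sigma, Finset.mem_powerset, Finset.mem_sdiff] at hp ⊢
      have hiS : i ∉ S := fun h => (Finset.mem_erase.mp (hp.2 h)).1 rfl
      exact ⟨hp.2.trans (Finset.erase_subset _ _), hp.1, hiS⟩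
    · rintro ⟨S, i⟩ hq
      simp only [Finset.mem_sigma, Finset.mem_powerset, Finset.mem_sdiff] at hq ⊢
      exact ⟨hq.2.1, Finset.subset_erase.mpr ⟨hq.1, hq.2.2⟩⟩
    · rintro ⟨i, S⟩ _; rfl
    · rintro ⟨S, i⟩ _; rfl
    · rintro ⟨i, S⟩ _; rfl

private lemma inner_eff {M K : ℕ} (hK1 : 1 ≤ K) (V : Finset (Fin M) → ℝ) (hV0 : V ∅ = 0)
    (SK : Finset (Fin M)) (hSK : SK.card = K) :
    ∑ i ∈ SK, ∑ S ∈ (SK.erase i).powerset,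
        ((S.card.factorial * (K - S.card - 1).factorial : ℕ) : ℝ) / (K.factorial : ℝ)
          * (V (insert i S) - V S)
      = V SK := by
  have hsplit : ∀ i ∈ SK, ∑ S ∈ (SK.erase i).powerset,
      ((S.card.factorial * (K - S.card - 1).factorial : ℕ) : ℝ) / (K.factorial : ℝ)
        * (V (insert i S) - V S)
      = (∑ S ∈ (SK.erase i).powerset,
          ((S.card.factorial * (K - S.card - 1).factorial : ℕ) : ℝ) / (K.factorial : ℝ)
            * V (insert i S))
        - ∑ S ∈ (SK.erase i).powerset,
          ((S.card.factorial * (K - S.card - 1).factorial : ℕ) : ℝ) / (K.factorial : ℝ)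
            * V S := by
    intro i _
    rw [← Finset.sum_sub_distrib]
    exact Finset.sum_congr rfl fun S _ => by ring
  rw [Finset.sum_congr rfl hsplit, Finset.sum_sub_distrib, sum1_reindex V SK,
    sum2_reindex V SK, ← Finset.sum_sub_distrib]
  have key : ∀ T ∈ SK.powerset,
      ((T.card : ℝ) *
          (((T.card - 1).factorial * (K - (T.card - 1) - 1).factorial : ℕ) : ℝ)
            / (K.factorial : ℝ) * V T)
        - ((SK \ T).card : ℝ) *
          (((T.card).factorial * (K - T.card - 1).factorial : ℕ) : ℝ)
            / (K.factorial : ℝ) * V T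
      = if T = SK then V SK else 0 := by
    intro T hT
    rw [Finset.mem_powerset] at hT
    have hcard : (SK \ T).card = K - T.card := by rw [Finset.card_sdiff_of_subset hT, hSK]
    have htK : T.card ≤ K := hSK ▸ Finset.card_le_card hT
    have hKfac : (0 : ℝ) < (K.factorial : ℝ) := by exact_mod_cast K.factorial_pos
    by_cases hTK : T = SK
    · subst hTK
      rw [if_pos rfl, hSK, hcard, hSK, Nat.sub_self]
      have h1 : K - (K - 1) - 1 = 0 := by omega
      have hn : K * (K - 1).factorial = K.factorial := Nat.mul_factorial_pred (by omega)
      have hc1 : ((K : ℝ) * (((K - 1).factorial * (K - (K - 1) - 1).factorial : ℕ) : ℝ)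
          / (K.factorial : ℝ)) = 1 := by
        rw [h1, Nat.factorial_zero, mul_one, div_eq_one_iff_eq hKfac.ne']
        exact_mod_cast hn
      rw [hc1]
      simp
    · rw [if_neg hTK]
      rcases Nat.eq_zero_or_pos T.card with h0 | hpos
      · have : T = ∅ := Finset.card_eq_zero.mp h0
        subst this
        simp [hV0]
      · -- 0 < T.card < K
        have hlt : T.card < K := by
          rcases lt_or_eq_of_le htK with h | h
          · exact h
          · exact absurd (Finset.eq_of_subset_of_card_le hT (by omega)) hTK
        have e1 : (T.card : ℝ) * ((T.card - 1).factorial * (K - (T.card - 1) - 1).factorial : ℕ)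
            = ((T.card.factorial * (K - T.card).factorial : ℕ) : ℝ) := by
          have hf : T.card * (T.card - 1).factorial = T.card.factorial := by
            conv_rhs => rw [show T.card = (T.card - 1) + 1 by omega]
            rw [Nat.factorial_succ]; congr 1; omega
          have hs : K - (T.card - 1) - 1 = K - T.card := by omega
          rw [hs]
          push_cast [← hf]
          ring
        have e2 : ((SK \ T).card : ℝ) * ((T.card.factorial * (K - T.card - 1).factorial : ℕ) : ℝ)
            = ((T.card.factorial * (K - T.card).factorial : ℕ) : ℝ) := by
          rw [hcard]
          have hf : (K - T.card) * (K - T.card - 1).factorial = (K - T.card).factorial := by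
            conv_rhs => rw [show K - T.card = (K - T.card - 1) + 1 by omega]
            rw [Nat.factorial_succ]; congr 1; omega
          push_cast [← hf]
          ring
        rw [e1, e2]
        ring
  rw [Finset.sum_congr rfl key, Finset.sum_ite_eq' SK.powerset SK (fun _ => V SK),
    if_pos (Finset.mem_powerset_self SK)]

/-- `K`-efficiency of the `K`-Shapley value: the sum of `K`-Shapley values over all players
equals `1 / C(M-1, K-1)` times the sum of the values of all `K`-sized coalitions. -/
theorem kshapley_efficiency (M K : ℕ) (hM : 1 ≤ M) (hK1 : 1 ≤ K) (hKM : K ≤ M)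
    (V : Finset (Fin M) → ℝ) (hV0 : V ∅ = 0) :
    ∑ i : Fin M, KShapley M K V i
      = (1 / ((M - 1).choose (K - 1) : ℝ)) *
          ∑ T ∈ Finset.powersetCard K (Finset.univ : Finset (Fin M)), V T := by
  unfold KShapley
  rw [← Finset.mul_sum]
  congr 1
  have swap : ∑ i : Fin M, ∑ SK ∈ Finset.filter (fun SK => i ∈ SK)
        (Finset.powersetCard K (Finset.univ : Finset (Fin M))),
      ∑ S ∈ (SK.erase i).powerset,
        ((S.card.factorial * (K - S.card - 1).factorial : ℕ) : ℝ) / (K.factorial : ℝ) *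
          (V (insert i S) - V S)
      = ∑ SK ∈ Finset.powersetCard K (Finset.univ : Finset (Fin M)), ∑ i ∈ SK,
      ∑ S ∈ (SK.erase i).powerset,
        ((S.card.factorial * (K - S.card - 1).factorial : ℕ) : ℝ) / (K.factorial : ℝ) *
          (V (insert i S) - V S) := by
    simp_rw [Finset.sum_filter]
    rw [Finset.sum_comm]
    refine Finset.sum_congr rfl fun SK _ => ?_
    rw [← Finset.sum_filter]
    congr 1
    ext i
    simp
  rw [swap]
  refine Finset.sum_congr rfl fun SK hSK => ?_
  rw [Finset.mem_powersetCard] at hSK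
  exact inner_eff hK1 V hV0 SK hSK.2
end

section
/- Claim 2 (axioms determine the value of carrier games): let ρ be a map assigning to every K-restricted cooperative game V on [M] a vector ρ(V) ∈ ℝ^M, and suppose ρ satisfies K-efficiency, symmetry, and the null player property. Then for every nonempty D ⊆ [M] with |D| ≤ K and every α ∈ ℝ, the value of ρ on the scaled carrier game u_{D,α} = α·u_D is ρ_i(u_{D,α}) = α · C(M − |D|, K − |D|) / (|D| · C(M−1, K−1)) for every i ∈ D, and ρ_i(u_{D,α}) = 0 for every i ∉ D. -/
open Finset

/-- The `K`-restricted carrier game associated with a coalition `D ⊆ [M]`: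
`u_D(S) = 1` if `D ⊆ S` and `0` otherwise. -/
noncomputable def carrier (M : ℕ) (D : Finset (Fin M)) : Finset (Fin M) → ℝ :=
  fun S => if D ⊆ S then 1 else 0

lemma card_supersets (M K : ℕ) (hKM : K ≤ M) (D : Finset (Fin M)) (hDK : D.card ≤ K) :
    ((Finset.powersetCard K (Finset.univ : Finset (Fin M))).filter (fun T => D ⊆ T)).card
      = (M - D.card).choose (K - D.card) := by
  have hc : (Finset.univ \ D).card = M - D.card := by
    rw [Finset.card_sdiff_of_subset (Finset.subset_univ D), Finset.card_univ, Fintype.card_fin]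
  rw [← hc, ← Finset.card_powersetCard (K - D.card) (Finset.univ \ D)]
  apply Finset.card_bij (fun T _ => T \ D)
  · intro T hT
    simp only [mem_filter, mem_powersetCard] at hT
    simp only [mem_powersetCard]
    refine ⟨fun x hx => ?_, ?_⟩
    · simp only [mem_sdiff, mem_univ, true_and] at hx ⊢
      exact hx.2
    · rw [card_sdiff_of_subset hT.2, hT.1.2]
  · intro T hT T' hT' h
    simp only [mem_filter, mem_powersetCard] at hT hT'
    have : T \ D ∪ D = T' \ D ∪ D := by rw [h]
    rwa [sdiff_union_of_subset hT.2, sdiff_union_of_subset hT'.2] at this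
  · intro U hU
    simp only [mem_powersetCard] at hU
    refine ⟨U ∪ D, ?_, ?_⟩
    · simp only [mem_filter, mem_powersetCard]
      have hUD : Disjoint U D := by
        intro s hs1 hs2 x hx
        have := hU.1 (hs1 hx)
        simp only [mem_sdiff] at this
        exact absurd (hs2 hx) this.2
      refine ⟨⟨fun x _ => mem_univ x, ?_⟩, subset_union_right⟩
      rw [Finset.card_union_of_disjoint hUD, hU.2]
      omega
    · have hUD : Disjoint U D := by
        intro s hs1 hs2 x hx
        have := hU.1 (hs1 hx)
        simp only [mem_sdiff] at this
        exact absurd (hs2 hx) this.2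
      rw [union_sdiff_right, sdiff_eq_self_of_disjoint hUD]

/-- Claim 2: if a solution concept `ρ` on `K`-restricted cooperative games on `[M]` satisfies
symmetry, the null player property and `K`-efficiency, then its value on the scaled carrier
game `α · u_D` is `α · C(M-|D|, K-|D|) / (|D| · C(M-1, K-1))` for players in `D`,
and `0` for players outside `D`. -/
theorem axioms_determine_carrier_value (M K : ℕ) (hM : 1 ≤ M) (hK1 : 1 ≤ K) (hKM : K ≤ M)
    (ρ : (Finset (Fin M) → ℝ) → Fin M → ℝ)
    (hsym : ∀ V : Finset (Fin M) → ℝ, V ∅ = 0 → ∀ i j : Fin M,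
      (∀ S : Finset (Fin M), i ∉ S → j ∉ S → S.card ≤ K - 1 →
        V (insert i S) = V (insert j S)) → ρ V i = ρ V j)
    (hnull : ∀ V : Finset (Fin M) → ℝ, V ∅ = 0 → ∀ i : Fin M,
      (∀ S : Finset (Fin M), i ∉ S → S.card ≤ K - 1 → V (insert i S) = V S) → ρ V i = 0)
    (heff : ∀ V : Finset (Fin M) → ℝ, V ∅ = 0 →
      ∑ i : Fin M, ρ V i
        = (1 / ((M - 1).choose (K - 1) : ℝ)) *
            ∑ T ∈ Finset.powersetCard K (Finset.univ : Finset (Fin M)), V T)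
    (D : Finset (Fin M)) (hD : D.Nonempty) (hDK : D.card ≤ K) (α : ℝ) :
    (∀ i ∈ D, ρ (fun S => α * carrier M D S) i
        = α * ((M - D.card).choose (K - D.card) : ℝ)
            / ((D.card : ℝ) * ((M - 1).choose (K - 1) : ℝ)))
    ∧ (∀ i ∉ D, ρ (fun S => α * carrier M D S) i = 0) := by
  set V : Finset (Fin M) → ℝ := fun S => α * carrier M D S with hV
  have hV0 : V ∅ = 0 := by
    simp [hV, carrier, Finset.subset_empty, hD.ne_empty]
  -- null players
  have hout : ∀ i ∉ D, ρ V i = 0 := by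
    intro i hi
    apply hnull V hV0
    intro S hiS _
    simp only [hV, carrier]
    congr 1
    have : D ⊆ insert i S ↔ D ⊆ S := by
      constructor
      · intro h x hx
        rcases Finset.mem_insert.mp (h hx) with h' | h'
        · exact absurd (h' ▸ hx) hi
        · exact h'
      · intro h; exact h.trans (Finset.subset_insert _ _)
    simp [this]
  -- symmetry among D
  have hsymD : ∀ i ∈ D, ∀ j ∈ D, ρ V i = ρ V j := by
    intro i hi j hj
    by_cases hij : i = j
    · rw [hij]
    apply hsym V hV0
    intro S hiS hjS _
    have h1 : ¬ D ⊆ insert i S := by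
      intro h
      rcases Finset.mem_insert.mp (h hj) with h' | h'
      · exact hij (h'.symm)
      · exact hjS h'
    have h2 : ¬ D ⊆ insert j S := by
      intro h
      rcases Finset.mem_insert.mp (h hi) with h' | h'
      · exact hij h'
      · exact hiS h'
    simp [hV, carrier, h1, h2]
  -- sum over T
  have hsum : ∑ T ∈ Finset.powersetCard K (Finset.univ : Finset (Fin M)), V T
      = α * ((M - D.card).choose (K - D.card) : ℝ) := by
    have := card_supersets M K hKM D hDK
    calc ∑ T ∈ Finset.powersetCard K (Finset.univ : Finset (Fin M)), V T
        = ∑ T ∈ Finset.powersetCard K (Finset.univ : Finset (Fin M)),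
            (if D ⊆ T then α else 0) := by
          apply Finset.sum_congr rfl
          intro T _
          simp only [hV, carrier]
          split <;> simp
      _ = α * (((Finset.powersetCard K (Finset.univ : Finset (Fin M))).filter
            (fun T => D ⊆ T)).card : ℝ) := by
          rw [Finset.sum_ite, Finset.sum_const, Finset.sum_const_zero, add_zero, nsmul_eq_mul, mul_comm]
      _ = α * ((M - D.card).choose (K - D.card) : ℝ) := by rw [this]
  -- efficiency
  have heffV := heff V hV0
  rw [hsum] at heffV
  obtain ⟨d, hd⟩ := hD
  have hsplit : ∑ i : Fin M, ρ V i = (D.card : ℝ) * ρ V d := by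
    rw [← Finset.sum_filter_add_sum_filter_not Finset.univ (· ∈ D)]
    have h1 : Finset.univ.filter (· ∈ D) = D := by ext x; simp
    have h2 : ∑ i ∈ Finset.univ.filter (¬ · ∈ D), ρ V i = 0 := by
      apply Finset.sum_eq_zero
      intro i hi
      simp only [mem_filter] at hi
      exact hout i hi.2
    rw [h1, h2, add_zero]
    rw [Finset.sum_congr rfl (fun i hi => hsymD i hi d hd), Finset.sum_const,
      nsmul_eq_mul]
  rw [hsplit] at heffV
  have hC : ((M - 1).choose (K - 1) : ℝ) ≠ 0 := by
    have : 0 < (M - 1).choose (K - 1) := Nat.choose_pos (by omega)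
    positivity
  have hDcard : (D.card : ℝ) ≠ 0 := by
    have : 0 < D.card := Finset.card_pos.mpr ⟨d, hd⟩
    positivity
  have hval : ρ V d = α * ((M - D.card).choose (K - D.card) : ℝ)
      / ((D.card : ℝ) * ((M - 1).choose (K - 1) : ℝ)) := by
    field_simp at heffV ⊢
    linarith [heffV]
  constructor
  · intro i hi
    rw [hsymD i hi d hd, hval]
  · exact hout
end

section
/- Explicit K-Shapley value of carrier games: for every nonempty D ⊆ [M] with |D| ≤ K and every α ∈ ℝ, the K-Shapley value of the scaled carrier game u_{D,α} = α·u_D is φ_i^K(u_{D,α}) = α · C(M − |D|, K − |D|) / (|D| · C(M−1, K−1)) for every i ∈ D, and φ_i^K(u_{D,α}) = 0 for every i ∉ D. -/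
open Finset

/-! For `i ∈ D` the marginal contribution of `i` to `S ∌ i` in `u_D` is the indicator of
`D \ {i} ⊆ S`. Hence the inner sum over a `K`-coalition `SK ∋ i` vanishes unless `D ⊆ SK`, and
then it is the total Shapley weight of the interval `[D \ {i}, SK \ {i}]`, which the
hockey-stick identity evaluates to `1 / |D|` (the classical Shapley value of `u_D` on `SK`).
There are `C(M - |D|, K - |D|)` coalitions `SK ⊇ D` of size `K`. A player `i ∉ D` is null. -/

noncomputable def shapleyWeight (K s : ℕ) : ℝ :=
  ((s.factorial * (K - s - 1).factorial : ℕ) : ℝ) / (K.factorial : ℝ)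

theorem Nat.succ_mul_sum_choose_mul_factorial (e c : ℕ) :
    (c + 1) * ∑ t ∈ range (e + 1), e.choose t * ((t + c).factorial * (e - t).factorial)
      = (e + c + 1).factorial := by
  have hterm : ∀ t ∈ range (e + 1), e.choose t * ((t + c).factorial * (e - t).factorial)
      = (t + c).choose c * (c.factorial * e.factorial) := by
    intro t ht
    have hte : t ≤ e := Nat.lt_succ_iff.mp (mem_range.mp ht)
    rw [← Nat.choose_mul_factorial_mul_factorial hte,
      ← Nat.add_choose_mul_factorial_mul_factorial t c]
    ring
  have hfac := Nat.choose_mul_factorial_mul_factorial (Nat.le_add_left (c + 1) e)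
  rw [Nat.add_sub_cancel, Nat.factorial_succ, ← add_assoc] at hfac
  rw [sum_congr rfl hterm, ← sum_mul, Nat.sum_range_add_choose, ← hfac]
  ring

theorem sum_shapleyWeight_card_add (e c : ℕ) :
    ∑ t ∈ range (e + 1), (e.choose t : ℝ) * shapleyWeight (e + c + 1) (c + t) = 1 / (c + 1) := by
  have hterm : ∀ t ∈ range (e + 1), (e.choose t : ℝ) * shapleyWeight (e + c + 1) (c + t)
      = ((e.choose t * ((t + c).factorial * (e - t).factorial) : ℕ) : ℝ)
          / (e + c + 1).factorial := by
    intro t ht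
    have hte : t ≤ e := Nat.lt_succ_iff.mp (mem_range.mp ht)
    rw [shapleyWeight, show e + c + 1 - (c + t) - 1 = e - t by omega, add_comm c t]
    push_cast
    ring
  have hsum := Nat.succ_mul_sum_choose_mul_factorial e c
  have hfac : ((e + c + 1).factorial : ℝ) ≠ 0 := by positivity
  rw [sum_congr rfl hterm, ← sum_div, ← Nat.cast_sum, div_eq_div_iff hfac (by positivity),
    ← Nat.cast_succ, one_mul, ← Nat.cast_mul, mul_comm, hsum]

theorem sum_Icc_shapleyWeight {α : Type*} [DecidableEq α] {A B : Finset α} (hAB : A ⊆ B) :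
    ∑ S ∈ Icc A B, shapleyWeight (#B + 1) #S = 1 / (#A + 1) := by
  have hdisj : ∀ T ∈ (B \ A).powerset, Disjoint A T := fun T hT =>
    disjoint_of_subset_right (mem_powerset.mp hT) disjoint_sdiff
  have hinj : Set.InjOn (A ∪ ·) ↑(B \ A).powerset := fun T hT U hU hTU => by
    rw [← union_sdiff_cancel_left (hdisj T hT), ← union_sdiff_cancel_left (hdisj U hU)]
    exact congrArg (· \ A) hTU
  have hB : #B = #(B \ A) + #A := (card_sdiff_add_card_eq_card hAB).symm
  rw [Icc_eq_image_powerset hAB, sum_image hinj,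
    sum_congr rfl fun T hT => by rw [card_union_of_disjoint (hdisj T hT)],
    sum_powerset_apply_card (fun t => shapleyWeight (#B + 1) (#A + t)), hB]
  simp only [nsmul_eq_mul]
  exact sum_shapleyWeight_card_add _ _

section Carrier

variable {M : ℕ} {D S : Finset (Fin M)} {i : Fin M}

theorem carrier_insert_sub_carrier (hi : i ∈ D) (hiS : i ∉ S) :
    carrier M D (insert i S) - carrier M D S = if D.erase i ⊆ S then 1 else 0 := by
  have hDS : ¬D ⊆ S := fun h => hiS (h hi)
  simp only [carrier, subset_insert_iff, if_neg hDS, sub_zero]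

theorem carrier_insert_of_notMem (hi : i ∉ D) : carrier M D (insert i S) = carrier M D S := by
  simp only [carrier, subset_insert_iff_of_notMem hi]

theorem sum_shapleyWeight_mul_carrier_marginal {SK : Finset (Fin M)} (hi : i ∈ D)
    (hiSK : i ∈ SK) :
    ∑ S ∈ (SK.erase i).powerset,
        shapleyWeight #SK #S * (carrier M D (insert i S) - carrier M D S)
      = if D ⊆ SK then (1 / #D : ℝ) else 0 := by
  have hmarg : ∀ S ∈ (SK.erase i).powerset,
      shapleyWeight #SK #S * (carrier M D (insert i S) - carrier M D S)
        = if D.erase i ⊆ S then shapleyWeight #SK #S else 0 := fun S hS => by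
    have hiS : i ∉ S := fun h => notMem_erase i SK (mem_powerset.mp hS h)
    rw [carrier_insert_sub_carrier hi hiS, mul_ite, mul_one, mul_zero]
  rw [sum_congr rfl hmarg, ← sum_filter, ← Icc_eq_filter_powerset]
  split_ifs with hDSK
  · rw [← card_erase_add_one hiSK, sum_Icc_shapleyWeight (erase_subset_erase i hDSK),
      card_erase_of_mem hi, Nat.cast_pred (card_pos.mpr ⟨i, hi⟩), sub_add_cancel]
  · refine sum_eq_zero fun S hS => absurd ?_ hDSK
    rw [mem_Icc] at hS
    intro x hx
    rcases eq_or_ne x i with rfl | hxi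
    · exact hiSK
    · exact mem_of_mem_erase (hS.2 (hS.1 (mem_erase.mpr ⟨hxi, hx⟩)))

end Carrier

theorem KShapley_eq_sum_shapleyWeight (M K : ℕ) (V : Finset (Fin M) → ℝ) (i : Fin M) :
    KShapley M K V i = (1 / ((M - 1).choose (K - 1) : ℝ)) *
      ∑ SK ∈ (powersetCard K univ).filter (i ∈ ·),
        ∑ S ∈ (SK.erase i).powerset, shapleyWeight K #S * (V (insert i S) - V S) :=
  rfl

theorem KShapley_const_mul (M K : ℕ) (α : ℝ) (V : Finset (Fin M) → ℝ) (i : Fin M) :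
    KShapley M K (fun S => α * V S) i = α * KShapley M K V i := by
  simp only [KShapley_eq_sum_shapleyWeight, mul_sum]
  refine sum_congr rfl fun SK _ => sum_congr rfl fun S _ => by ring

theorem KShapley_carrier_of_mem {M K : ℕ} {D : Finset (Fin M)} (hDK : #D ≤ K) {i : Fin M}
    (hi : i ∈ D) :
    KShapley M K (carrier M D) i
      = ((M - #D).choose (K - #D) : ℝ) / (#D * ((M - 1).choose (K - 1) : ℝ)) := by
  have hinner : ∀ SK ∈ (powersetCard K univ).filter (i ∈ ·),
      ∑ S ∈ (SK.erase i).powerset,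
          shapleyWeight K #S * (carrier M D (insert i S) - carrier M D S)
        = if D ⊆ SK then (1 / #D : ℝ) else 0 := fun SK hSK => by
    obtain ⟨hSK, hiSK⟩ := mem_filter.mp hSK
    rw [← (mem_powersetCard.mp hSK).2]
    exact sum_shapleyWeight_mul_carrier_marginal hi hiSK
  have hcount : #((powersetCard K univ).filter (D ⊆ ·)) = (M - #D).choose (K - #D) := by
    rw [card_filter_powersetCard_subset D univ K (subset_univ D) hDK, card_univ,
      Fintype.card_fin]
  rw [KShapley_eq_sum_shapleyWeight, sum_congr rfl hinner, ← sum_filter, filter_filter,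
    filter_congr fun SK _ => and_iff_right_of_imp fun hDSK => hDSK hi, sum_const, hcount,
    nsmul_eq_mul]
  ring

theorem KShapley_carrier_of_notMem (M K : ℕ) {D : Finset (Fin M)} {i : Fin M} (hi : i ∉ D) :
    KShapley M K (carrier M D) i = 0 := by
  simp only [KShapley_eq_sum_shapleyWeight, carrier_insert_of_notMem hi, sub_self, mul_zero,
    sum_const_zero]

theorem kshapley_carrier_general (M K : ℕ) (D : Finset (Fin M)) (hDK : D.card ≤ K) (α : ℝ) :
    (∀ i ∈ D, KShapley M K (fun S => α * carrier M D S) i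
        = α * ((M - D.card).choose (K - D.card) : ℝ)
            / ((D.card : ℝ) * ((M - 1).choose (K - 1) : ℝ)))
    ∧ (∀ i ∉ D, KShapley M K (fun S => α * carrier M D S) i = 0) := by
  refine ⟨fun i hi => ?_, fun i hi => ?_⟩
  · rw [KShapley_const_mul, KShapley_carrier_of_mem hDK hi, mul_div_assoc]
  · rw [KShapley_const_mul, KShapley_carrier_of_notMem M K hi, mul_zero]

/-- Explicit `K`-Shapley value of scaled carrier games: for nonempty `D` with `|D| ≤ K`,
`φ_i^K(α·u_D) = α · C(M-|D|, K-|D|) / (|D| · C(M-1, K-1))` for `i ∈ D`, and `0` for `i ∉ D`. -/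
theorem kshapley_carrier (M K : ℕ) (hM : 1 ≤ M) (hK1 : 1 ≤ K) (hKM : K ≤ M)
    (D : Finset (Fin M)) (hD : D.Nonempty) (hDK : D.card ≤ K) (α : ℝ) :
    (∀ i ∈ D, KShapley M K (fun S => α * carrier M D S) i
        = α * ((M - D.card).choose (K - D.card) : ℝ)
            / ((D.card : ℝ) * ((M - 1).choose (K - 1) : ℝ)))
    ∧ (∀ i ∉ D, KShapley M K (fun S => α * carrier M D S) i = 0) :=
  kshapley_carrier_general M K D hDK α
end

section
/- Per-round fairness error bound from uniform estimation error: let M ≥ 1, K ≥ 1, c ≥ 0, and let (φ_a)_{a=1}^M and (φ̂_a)_{a=1}^M be real numbers with φ_a > 0 for all a, φ̂_a ≥ 0 for all a, Σ_{a=1}^M φ̂_a > 0, and |φ_a − φ̂_a| ≤ c for every a. Define the learned policy π(a) = K·φ̂_a / Σ_{j=1}^M φ̂_j and the fair policy π*(a) = K·φ_a / Σ_{j=1}^M φ_j. Then Σ_{a=1}^M |π(a) − π*(a)| ≤ 2·K·M·c / Σ_{j=1}^M φ_j. -/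
open Finset

/-- Per-round fairness error bound from uniform estimation error: if each estimated merit is
within `c` of the corresponding (positive) true merit, then the L1 distance between the
learned policy `π(a) = K·φ̂_a/Σφ̂` and the fair policy `π*(a) = K·φ_a/Σφ` is at most
`2·K·M·c / Σφ`. -/
theorem per_round_fairness_bound (M K : ℕ) (hM : 1 ≤ M) (hK : 1 ≤ K)
    (c : ℝ) (hc : 0 ≤ c) (φ φhat : Fin M → ℝ)
    (hφ : ∀ a, 0 < φ a) (hφhat : ∀ a, 0 ≤ φhat a) (hsum : 0 < ∑ j, φhat j)
    (herr : ∀ a, |φ a - φhat a| ≤ c) :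
    ∑ a, |(K : ℝ) * φhat a / (∑ j, φhat j) - (K : ℝ) * φ a / (∑ j, φ j)|
      ≤ 2 * K * M * c / ∑ j, φ j := by
  have hne : Nonempty (Fin M) := Fin.pos_iff_nonempty.mp hM
  set S := ∑ j, φ j with hSdef
  set T := ∑ j, φhat j with hTdef
  clear_value S T
  have hS : 0 < S := hSdef ▸ Finset.sum_pos (fun a _ => hφ a) Finset.univ_nonempty
  have hT : 0 < T := hsum
  have herrsum : ∑ a, |φ a - φhat a| ≤ M * c := by
    calc ∑ a, |φ a - φhat a| ≤ ∑ _a : Fin M, c := Finset.sum_le_sum fun a _ => herr a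
    _ = M * c := by simp [mul_comm]
  have hdiff : |S - T| ≤ M * c := by
    calc |S - T| = |∑ a, (φ a - φhat a)| := by rw [Finset.sum_sub_distrib, ← hSdef, ← hTdef]
    _ ≤ ∑ a, |φ a - φhat a| := Finset.abs_sum_le_sum_abs _ _
    _ ≤ M * c := herrsum
  have hterm : ∀ a : Fin M,
      |(K : ℝ) * φhat a / T - (K : ℝ) * φ a / S|
        ≤ K * (|φ a - φhat a| / S + φhat a * |S - T| / (T * S)) := by
    intro a
    have h1 : (K : ℝ) * φhat a / T - (K : ℝ) * φ a / S
        = (K : ℝ) * ((φhat a - φ a) / S + φhat a * (S - T) / (T * S)) := by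
      field_simp
      ring
    rw [h1, abs_mul, abs_of_nonneg (by positivity : (0:ℝ) ≤ (K:ℝ))]
    have h2 : |(φhat a - φ a) / S + φhat a * (S - T) / (T * S)|
        ≤ |φ a - φhat a| / S + φhat a * |S - T| / (T * S) := by
      refine (abs_add_le _ _).trans ?_
      have e1 : |(φhat a - φ a) / S| = |φ a - φhat a| / S := by
        rw [abs_div, abs_of_pos hS, abs_sub_comm]
      have e2 : |φhat a * (S - T) / (T * S)| = φhat a * |S - T| / (T * S) := by
        rw [abs_div, abs_mul, abs_of_nonneg (hφhat a),
          abs_of_pos (mul_pos hT hS)]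
      rw [e1, e2]
    exact mul_le_mul_of_nonneg_left h2 (by positivity)
  calc ∑ a, |(K : ℝ) * φhat a / T - (K : ℝ) * φ a / S|
      ≤ ∑ a, (K : ℝ) * (|φ a - φhat a| / S + φhat a * |S - T| / (T * S)) :=
        Finset.sum_le_sum fun a _ => hterm a
    _ = (K : ℝ) * ((∑ a, |φ a - φhat a|) / S + T * |S - T| / (T * S)) := by
        rw [← Finset.mul_sum, Finset.sum_add_distrib, ← Finset.sum_div,
          ← Finset.sum_div, ← Finset.sum_mul, ← hTdef]
    _ = (K : ℝ) * ((∑ a, |φ a - φhat a|) / S + |S - T| / S) := by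
        congr 2
        field_simp
    _ ≤ (K : ℝ) * (M * c / S + M * c / S) := by
        gcongr
    _ = 2 * K * M * c / S := by ring
end
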